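/- arXiv:0804.3202 — 3 statements merged into one kernel-verified Lean document; each statement's English description precedes it below -/
import Mathlib

section
/- Let H₀ be a self-adjoint operator on a finite-dimensional complex Hilbert space, φ a unit vector, H_ω = H₀ + ω·Π_φ for ω ∈ ℝ. For z = E + iε with ε > 0, the Lebesgue integral over ω ∈ ℝ of Im ⟨φ, (H_ω − z)⁻¹ φ⟩ equals π. -/
/-!
Write `g = ⟨φ, (H₀ - z)⁻¹φ⟩`. Since `H₀` is Hermitian and `Im z > 0`, `Im g > 0`. The rank-one
(Sherman–Morrison) formula gives `⟨φ, (H_ω - z)⁻¹φ⟩ = g / (1 + ωg) = (ω + g⁻¹)⁻¹`, and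
`Im g⁻¹ < 0`, so as a function of `ω` the imaginary part is `π` times a Cauchy density.
-/

open Matrix MeasureTheory ProbabilityTheory
open scoped ComplexOrder

namespace Matrix

variable {n : Type*} [Fintype n] [DecidableEq n]

lemma IsHermitian.im_star_dotProduct_sub_smul_one_mulVec {H : Matrix n n ℂ} (hH : H.IsHermitian)
    (z : ℂ) (v : n → ℂ) :
    (star v ⬝ᵥ ((H - z • 1) *ᵥ v)).im = -z.im * (star v ⬝ᵥ v).re := by
  have hv : (star v ⬝ᵥ v).im = 0 := (Complex.nonneg_iff.mp (dotProduct_star_self_nonneg v)).2.symm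
  have hHv : (star v ⬝ᵥ (H *ᵥ v)).im = 0 := hH.im_star_dotProduct_mulVec_self v
  rw [sub_mulVec, smul_mulVec, one_mulVec, dotProduct_sub, dotProduct_smul, smul_eq_mul,
    Complex.sub_im, hHv, Complex.mul_im, hv]
  simp

lemma IsHermitian.isUnit_sub_smul_one {H : Matrix n n ℂ} (hH : H.IsHermitian) {z : ℂ}
    (hz : z.im ≠ 0) : IsUnit (H - z • 1) := by
  rw [← mulVec_injective_iff_isUnit]
  intro x y hxy
  by_contra hne
  have hpos : 0 < (star (x - y) ⬝ᵥ (x - y)).re :=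
    (Complex.pos_iff.mp (dotProduct_star_self_pos_iff.mpr (sub_ne_zero.mpr hne))).1
  have h := hH.im_star_dotProduct_sub_smul_one_mulVec z (x - y)
  rw [mulVec_sub, hxy, sub_self, dotProduct_zero, Complex.zero_im] at h
  exact hz ((mul_eq_zero.mp h.symm).resolve_right hpos.ne' |> neg_eq_zero.mp)

lemma IsHermitian.im_star_dotProduct_inv_sub_smul_one_mulVec_pos {H : Matrix n n ℂ}
    (hH : H.IsHermitian) {z : ℂ} (hz : 0 < z.im) {φ : n → ℂ} (hφ : φ ≠ 0) :
    0 < (star φ ⬝ᵥ ((H - z • 1)⁻¹ *ᵥ φ)).im := by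
  set A := H - z • 1
  have hA : IsUnit A.det := (A.isUnit_iff_isUnit_det).mp (hH.isUnit_sub_smul_one hz.ne')
  set u := A⁻¹ *ᵥ φ
  have hAu : A *ᵥ u = φ := by rw [mulVec_mulVec, mul_nonsing_inv _ hA, one_mulVec]
  clear_value u
  have hu : u ≠ 0 := by rintro hu; rw [hu, mulVec_zero] at hAu; exact hφ hAu.symm
  have hAH : Aᴴ = H - star z • 1 := by
    rw [conjTranspose_sub, conjTranspose_smul, conjTranspose_one, hH.eq]
  have hpos : 0 < (star u ⬝ᵥ u).re :=
    (Complex.pos_iff.mp (dotProduct_star_self_pos_iff.mpr hu)).1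
  -- `⟨φ, A⁻¹φ⟩ = ⟨Au, u⟩ = ⟨u, Aᴴu⟩` with `Aᴴ = H - z̄`, and `Im z̄ = -Im z`.
  have h : star φ ⬝ᵥ u = star u ⬝ᵥ (Aᴴ *ᵥ u) := by
    rw [← hAu, star_mulVec, dotProduct_mulVec]
  rw [h, hAH, hH.im_star_dotProduct_sub_smul_one_mulVec, Complex.star_def, Complex.conj_im,
    neg_neg]
  exact mul_pos hz hpos

lemma dotProduct_inv_add_smul_vecMulVec_mulVec {K : Type*} [Field K]
    {A : Matrix n n K} (hA : IsUnit A) (ω : K) (u v : n → K)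
    (hM : IsUnit (A + ω • vecMulVec u v)) :
    v ⬝ᵥ ((A + ω • vecMulVec u v)⁻¹ *ᵥ u)
      = v ⬝ᵥ (A⁻¹ *ᵥ u) / (1 + ω * v ⬝ᵥ (A⁻¹ *ᵥ u)) := by
  set M := A + ω • vecMulVec u v
  set g := v ⬝ᵥ (A⁻¹ *ᵥ u)
  have hMu : M *ᵥ (A⁻¹ *ᵥ u) = (1 + ω * g) • u := by
    rw [add_mulVec, mulVec_mulVec, mul_nonsing_inv _ ((A.isUnit_iff_isUnit_det).mp hA),
      one_mulVec, smul_mulVec, vecMulVec_mulVec, op_smul_eq_smul, smul_smul, add_smul, one_smul]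
  have hg : g = (1 + ω * g) * v ⬝ᵥ (M⁻¹ *ᵥ u) := by
    rw [← smul_eq_mul, ← dotProduct_smul, ← mulVec_smul, ← hMu, mulVec_mulVec,
      nonsing_inv_mul _ ((M.isUnit_iff_isUnit_det).mp hM), one_mulVec]
  have hc : 1 + ω * g ≠ 0 := by
    intro hc
    rw [hc, zero_mul] at hg
    simp [hg] at hc
  rw [eq_div_iff hc, mul_comm]
  exact hg.symm

end Matrix

lemma Complex.integral_im_inv_ofReal_add {w : ℂ} (hw : w.im < 0) :
    ∫ x : ℝ, ((x : ℂ) + w)⁻¹.im = Real.pi := by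
  set γ : NNReal := ⟨-w.im, by linarith⟩
  have hγ : (γ : ℝ) = -w.im := rfl
  have h : ∀ x : ℝ, ((x : ℂ) + w)⁻¹.im = Real.pi * cauchyPDFReal (-w.re) γ x := by
    intro x
    rw [cauchyPDFReal_def, Complex.inv_im, Complex.normSq_apply]
    simp only [Complex.add_re, Complex.ofReal_re, Complex.add_im, Complex.ofReal_im, zero_add]
    rw [hγ]
    field_simp
    ring
  have hγ0 : γ ≠ 0 := fun h0 => hw.ne (by linarith [congrArg NNReal.toReal h0])
  simp_rw [h]
  rw [integral_const_mul, integral_cauchyPDFReal_eq_one _ hγ0, mul_one]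

/-- The Lebesgue integral over the coupling constant `ω` of the imaginary part of the
diagonal matrix element of the resolvent of the rank-one perturbation `H_ω = H₀ + ω Π_φ`
at `z = E + iε`, `ε > 0`, equals `π`. -/
theorem integral_im_resolvent_eq_pi {n : Type*} [Fintype n] [DecidableEq n]
    (H₀ : Matrix n n ℂ) (hH₀ : H₀.IsHermitian)
    (φ : n → ℂ) (hφ : star φ ⬝ᵥ φ = 1)
    (E ε : ℝ) (hε : 0 < ε) :
    ∫ ω : ℝ,
        (star φ ⬝ᵥ (((H₀ + (ω : ℂ) • vecMulVec φ (star φ))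
          - ((E : ℂ) + (ε : ℂ) * Complex.I) • (1 : Matrix n n ℂ))⁻¹ *ᵥ φ)).im
      = Real.pi := by
  set z : ℂ := (E : ℂ) + (ε : ℂ) * Complex.I
  have hz : 0 < z.im := by simpa [z] using hε
  have hφ0 : φ ≠ 0 := by rintro rfl; simp at hφ
  set g := star φ ⬝ᵥ ((H₀ - z • 1)⁻¹ *ᵥ φ) with hg_def
  have hg : 0 < g.im := hH₀.im_star_dotProduct_inv_sub_smul_one_mulVec_pos hz hφ0
  have hg0 : g ≠ 0 := fun h => hg.ne' (by simp [h])
  have hresolvent (ω : ℝ) :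
      star φ ⬝ᵥ ((H₀ + (ω : ℂ) • vecMulVec φ (star φ) - z • 1)⁻¹ *ᵥ φ) = ((ω : ℂ) + g⁻¹)⁻¹ := by
    have hHω : (H₀ + (ω : ℂ) • vecMulVec φ (star φ)).IsHermitian :=
      hH₀.add ((posSemidef_vecMulVec_self_star φ).isHermitian.smul (Complex.conj_ofReal ω))
    have hMω := hHω.isUnit_sub_smul_one hz.ne'
    rw [add_sub_right_comm] at hMω ⊢
    rw [dotProduct_inv_add_smul_vecMulVec_mulVec (hH₀.isUnit_sub_smul_one hz.ne') _ _ _ hMω,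
      ← hg_def]
    field_simp
    ring
  have hg_inv : (g⁻¹).im < 0 := by
    rw [Complex.inv_im, neg_div, neg_lt_zero]
    exact div_pos hg (Complex.normSq_pos.mpr hg0)
  simp_rw [hresolvent]
  exact Complex.integral_im_inv_ofReal_add hg_inv
end

section
/- Let H₀ be a self-adjoint operator on a finite-dimensional Hilbert space H, φ ∈ H with ‖φ‖ = 1, and H_s = H₀ + s Π_φ. Then for all real a < b and all 0 ≤ s ≤ t: tr χ_{(a,b]}(H_s) ≤ 1 + tr χ_{(a,b]}(H_t). -/
open Matrix MeasureTheory

/-- The spectral projection `χ_I(A)` of a Hermitian matrix `A` onto a Borel set `I ⊆ ℝ`. -/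
noncomputable def specProj {n : Type*} [Fintype n] [DecidableEq n]
    (A : Matrix n n ℂ) (I : Set ℝ) : Matrix n n ℂ :=
  if h : A.IsHermitian then h.cfc (Set.indicator I 1) else 0

/-!
Write `N_H(x)` for the number of eigenvalues `≤ x` of a Hermitian `H`, so that
`tr χ_{(a,b]}(H) = N_H(b) - N_H(a)`. If the quadratic form of `A` is bounded by that of `B` on a
subspace `K`, then `N_B(x) ≤ N_A(x) + codim K`: the span of the eigenvectors of `B` with
eigenvalue `≤ x`, cut down to `K`, meets the span of the eigenvectors of `A` with eigenvalue `> x`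
only in `0`. For `t ≥ s` the form of `H_t = H_s + (t - s) Π_φ` dominates that of `H_s` everywhere and
agrees with it on `φ^⊥`, so `N_{H_t}(a) ≤ N_{H_s}(a)` and `N_{H_s}(b) ≤ N_{H_t}(b) + 1`.
-/

open Module Submodule Finset InnerProductSpace

namespace OrthonormalBasis

variable {𝕜 E ι : Type*} [RCLike 𝕜] [NormedAddCommGroup E] [InnerProductSpace 𝕜 E] [Fintype ι]
  (b : OrthonormalBasis ι 𝕜 E)

theorem inner_eq_zero_of_mem_span_image {S : Set ι} {v : E} (hv : v ∈ span 𝕜 (b '' S))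
    {i : ι} (hi : i ∉ S) : ⟪b i, v⟫_𝕜 = 0 := by
  rw [← b.coe_toBasis, Basis.mem_span_image] at hv
  rw [← b.repr_apply_apply, ← b.coe_toBasis_repr_apply]
  by_contra h
  exact hi (hv (Finsupp.mem_support_iff.mpr h))

theorem finrank_span_image (p : ι → Prop) [DecidablePred p] :
    finrank 𝕜 (span 𝕜 (b '' {i | p i})) = #{i | p i} := by
  rw [← coe_filter_univ, Set.image_eq_range]
  exact (finrank_span_eq_card (b.orthonormal.linearIndependent.comp _ Subtype.val_injective)).trans
    (Fintype.card_coe _)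

variable (μ : ι → ℝ)

theorem sum_le_of_mem_span_image {x : ℝ} {v : E} (hv : v ∈ span 𝕜 (b '' {i | μ i ≤ x})) :
    ∑ i, μ i * ‖⟪b i, v⟫_𝕜‖ ^ 2 ≤ x * ‖v‖ ^ 2 := by
  rw [← b.sum_sq_norm_inner_right, Finset.mul_sum]
  refine Finset.sum_le_sum fun i _ => ?_
  by_cases hi : μ i ≤ x
  · gcongr
  · simp [b.inner_eq_zero_of_mem_span_image hv hi]

theorem lt_sum_of_mem_span_image {x : ℝ} {v : E} (hv : v ∈ span 𝕜 (b '' {i | x < μ i}))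
    (hv0 : v ≠ 0) : x * ‖v‖ ^ 2 < ∑ i, μ i * ‖⟪b i, v⟫_𝕜‖ ^ 2 := by
  have hterm (i : ι) : x * ‖⟪b i, v⟫_𝕜‖ ^ 2 ≤ μ i * ‖⟪b i, v⟫_𝕜‖ ^ 2 := by
    by_cases hi : x < μ i
    · gcongr
    · simp [b.inner_eq_zero_of_mem_span_image hv hi]
  obtain ⟨j, hj⟩ : ∃ j, ⟪b j, v⟫_𝕜 ≠ 0 := by
    by_contra! h
    exact hv0 (by simpa [h] using (b.sum_repr' v).symm)
  have hxj : x < μ j := by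
    by_contra hx
    exact hj (b.inner_eq_zero_of_mem_span_image hv hx)
  rw [← b.sum_sq_norm_inner_right, Finset.mul_sum]
  exact Finset.sum_lt_sum (fun i _ => hterm i) ⟨j, mem_univ j, by gcongr⟩

theorem card_le_card_add_finrank_orthogonal {ι' : Type*} [Fintype ι']
    (c : OrthonormalBasis ι' 𝕜 E) (ν : ι' → ℝ) (K : Submodule 𝕜 E)
    (hK : ∀ v ∈ K, ∑ i, μ i * ‖⟪b i, v⟫_𝕜‖ ^ 2 ≤ ∑ j, ν j * ‖⟪c j, v⟫_𝕜‖ ^ 2) (x : ℝ) :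
    #{j | ν j ≤ x} ≤ #{i | μ i ≤ x} + finrank 𝕜 Kᗮ := by
  have := b.toBasis.finiteDimensional_of_finite
  set V := span 𝕜 (c '' {j | ν j ≤ x})
  set W := span 𝕜 (b '' {i | x < μ i})
  have hdisj : Disjoint (V ⊓ K) W := by
    rw [Submodule.disjoint_def]
    rintro v ⟨hvV, hvK⟩ hvW
    by_contra hv0
    have := c.sum_le_of_mem_span_image ν hvV
    have := b.lt_sum_of_mem_span_image μ hvW hv0
    linarith [hK v hvK]
  have hdim_disj := Submodule.finrank_add_finrank_le_of_disjoint hdisj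
  have hdim_sup_inf := Submodule.finrank_sup_add_finrank_inf_eq V K
  have hdim_sup := Submodule.finrank_le (V ⊔ K)
  have hdim_orth := K.finrank_add_finrank_orthogonal
  have hV : finrank 𝕜 V = #{j | ν j ≤ x} := c.finrank_span_image _
  have hW : finrank 𝕜 W = #{i | x < μ i} := b.finrank_span_image _
  have hcard : #{i | μ i ≤ x} + #{i | x < μ i} = finrank 𝕜 E := by
    simpa only [not_le, card_univ, ← finrank_eq_card_basis b.toBasis] using
      card_filter_add_card_filter_not (s := univ) (fun i => μ i ≤ x)
  omega

theorem re_inner_map_self_eq_sum {T : E →ₗ[𝕜] E} (hT : T.IsSymmetric)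
    (hb : ∀ i, T (b i) = (μ i : 𝕜) • b i) (v : E) :
    RCLike.re ⟪v, T v⟫_𝕜 = ∑ i, μ i * ‖⟪b i, v⟫_𝕜‖ ^ 2 := by
  rw [← b.sum_inner_mul_inner, map_sum]
  refine Finset.sum_congr rfl fun i _ => ?_
  rw [← hT, hb, inner_smul_left, RCLike.conj_ofReal, mul_left_comm, ← inner_conj_symm (b i) v,
    RCLike.mul_conj, RCLike.norm_conj]
  norm_cast

end OrthonormalBasis

theorem Finset.card_filter_mem_Ioc_add_card_filter_le {ι : Type*} [Fintype ι] (μ : ι → ℝ)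
    {a b : ℝ} (hab : a ≤ b) :
    #{i | μ i ∈ Set.Ioc a b} + #{i | μ i ≤ a} = #{i | μ i ≤ b} := by
  classical
  rw [← card_union_of_disjoint, ← filter_or]
  · congr! 2 with i
    grind
  · exact disjoint_filter.2 fun i _ h => not_le.2 h.1

namespace Matrix

variable {𝕜 n : Type*} [RCLike 𝕜]

theorem IsHermitian.add_smul_vecMulVec {A : Matrix n n 𝕜} (hA : A.IsHermitian) (φ : n → 𝕜)
    (c : ℝ) : (A + (c : 𝕜) • vecMulVec φ (star φ)).IsHermitian :=
  hA.add (IsHermitian.smul (by rw [IsHermitian, conjTranspose_vecMulVec, star_star])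
    (RCLike.conj_ofReal c))

variable [Fintype n] [DecidableEq n]

theorem re_inner_toEuclideanLin_add_smul_vecMulVec (A : Matrix n n 𝕜) (φ : n → 𝕜) (s t : ℝ)
    (v : EuclideanSpace 𝕜 n) :
    RCLike.re ⟪v, toEuclideanLin (A + (t : 𝕜) • vecMulVec φ (star φ)) v⟫_𝕜
      = RCLike.re ⟪v, toEuclideanLin (A + (s : 𝕜) • vecMulVec φ (star φ)) v⟫_𝕜
        + (t - s) * ‖⟪WithLp.toLp 2 φ, v⟫_𝕜‖ ^ 2 := by
  set ψ : EuclideanSpace 𝕜 n := WithLp.toLp 2 φ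
  have hsplit : A + (t : 𝕜) • vecMulVec φ (star φ)
      = A + (s : 𝕜) • vecMulVec φ (star φ) + ((t - s : ℝ) : 𝕜) • vecMulVec φ (star φ) := by
    push_cast
    module
  have hP : vecMulVec φ (star φ) = toEuclideanLin.symm (rankOne 𝕜 ψ ψ) :=
    (symm_toEuclideanLin_rankOne _ _).symm
  rw [hsplit, map_add _ (A + _), map_smul, hP, LinearEquiv.apply_symm_apply]
  simp only [LinearMap.add_apply, LinearMap.smul_apply, inner_add_right, inner_smul_right,
    ContinuousLinearMap.coe_coe, rankOne_apply, map_add]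
  rw [← inner_conj_symm v ψ, RCLike.mul_conj]
  norm_cast

namespace IsHermitian

variable {A : Matrix n n 𝕜} (hA : A.IsHermitian)

theorem toEuclideanLin_eigenvectorBasis (j : n) :
    toEuclideanLin A (hA.eigenvectorBasis j) = (hA.eigenvalues j : 𝕜) • hA.eigenvectorBasis j := by
  apply WithLp.ofLp_injective
  rw [ofLp_toLpLin, WithLp.ofLp_smul, ← RCLike.real_smul_eq_coe_smul (K := 𝕜)]
  exact hA.mulVec_eigenvectorBasis j

theorem re_inner_toEuclideanLin_self (v : EuclideanSpace 𝕜 n) :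
    RCLike.re ⟪v, toEuclideanLin A v⟫_𝕜
      = ∑ i, hA.eigenvalues i * ‖⟪hA.eigenvectorBasis i, v⟫_𝕜‖ ^ 2 :=
  hA.eigenvectorBasis.re_inner_map_self_eq_sum _ (isSymmetric_toEuclideanLin_iff.mpr hA)
    hA.toEuclideanLin_eigenvectorBasis v

theorem card_eigenvalues_le_of_re_inner_le {B : Matrix n n 𝕜} (hB : B.IsHermitian)
    (K : Submodule 𝕜 (EuclideanSpace 𝕜 n))
    (hK : ∀ v ∈ K, RCLike.re ⟪v, toEuclideanLin A v⟫_𝕜 ≤ RCLike.re ⟪v, toEuclideanLin B v⟫_𝕜)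
    (x : ℝ) : #{j | hB.eigenvalues j ≤ x} ≤ #{i | hA.eigenvalues i ≤ x} + finrank 𝕜 Kᗮ :=
  hA.eigenvectorBasis.card_le_card_add_finrank_orthogonal _ hB.eigenvectorBasis _ K
    (fun v hv => by
      simpa only [hA.re_inner_toEuclideanLin_self, hB.re_inner_toEuclideanLin_self] using hK v hv)
    x

theorem card_eigenvalues_mem_Ioc_le_add_one_of_rankOne {B C : Matrix n n 𝕜}
    (hB : B.IsHermitian) (hC : C.IsHermitian) (ψ : EuclideanSpace 𝕜 n) {c : ℝ} (hc : 0 ≤ c)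
    (hBC : ∀ v, RCLike.re ⟪v, toEuclideanLin C v⟫_𝕜
      = RCLike.re ⟪v, toEuclideanLin B v⟫_𝕜 + c * ‖⟪ψ, v⟫_𝕜‖ ^ 2) {a b : ℝ} (hab : a ≤ b) :
    #{i | hB.eigenvalues i ∈ Set.Ioc a b} ≤ #{i | hC.eigenvalues i ∈ Set.Ioc a b} + 1 := by
  have hcount_a := hB.card_eigenvalues_le_of_re_inner_le hC ⊤
    (fun v _ => by rw [hBC]; nlinarith [sq_nonneg ‖⟪ψ, v⟫_𝕜‖]) a
  have hcount_b := hC.card_eigenvalues_le_of_re_inner_le hB (𝕜 ∙ ψ)ᗮ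
    (fun v hv => by
      rw [hBC, mem_orthogonal_singleton_iff_inner_right.1 hv, norm_zero, zero_pow two_ne_zero,
        mul_zero, add_zero]) b
  rw [top_orthogonal_eq_bot, finrank_bot] at hcount_a
  rw [orthogonal_orthogonal] at hcount_b
  have hψ : finrank 𝕜 (𝕜 ∙ ψ) ≤ 1 := (finrank_span_le_card {ψ}).trans (by simp)
  have hB_split := card_filter_mem_Ioc_add_card_filter_le hB.eigenvalues hab
  have hC_split := card_filter_mem_Ioc_add_card_filter_le hC.eigenvalues hab
  omega

theorem trace_cfc (f : ℝ → ℝ) : (hA.cfc f).trace = ∑ i, (f (hA.eigenvalues i) : 𝕜) := by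
  rw [IsHermitian.cfc, Unitary.conjStarAlgAut_apply, trace_mul_cycle,
    Unitary.coe_star_mul_self, one_mul, trace_diagonal]
  rfl

end IsHermitian

end Matrix

theorem re_trace_specProj {n : Type*} [Fintype n] [DecidableEq n] {A : Matrix n n ℂ}
    (hA : A.IsHermitian) (I : Set ℝ) [DecidablePred (· ∈ I)] :
    (specProj A I).trace.re = #{i | hA.eigenvalues i ∈ I} := by
  rw [specProj, dif_pos hA, hA.trace_cfc, Complex.re_sum]
  simp [Set.indicator_apply, apply_ite Complex.re, Finset.sum_boole]

theorem interlacing_rank_one_general {n : Type*} [Fintype n] [DecidableEq n]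
    (H₀ : Matrix n n ℂ) (hH₀ : H₀.IsHermitian)
    (φ : n → ℂ)
    (a b : ℝ) (hab : a < b) (s t : ℝ) (hst : s ≤ t) :
    ((specProj (H₀ + (s : ℂ) • vecMulVec φ (star φ)) (Set.Ioc a b)).trace).re
      ≤ 1 + ((specProj (H₀ + (t : ℂ) • vecMulVec φ (star φ)) (Set.Ioc a b)).trace).re := by
  have hHs : (H₀ + (s : ℂ) • vecMulVec φ (star φ)).IsHermitian := hH₀.add_smul_vecMulVec φ s
  have hHt : (H₀ + (t : ℂ) • vecMulVec φ (star φ)).IsHermitian := hH₀.add_smul_vecMulVec φ t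
  have hcount := hHs.card_eigenvalues_mem_Ioc_le_add_one_of_rankOne hHt _ (sub_nonneg.2 hst)
    (re_inner_toEuclideanLin_add_smul_vecMulVec H₀ φ s t) hab.le
  rw [re_trace_specProj hHs, re_trace_specProj hHt, add_comm (1 : ℝ)]
  exact_mod_cast hcount

/-- **Eigenvalue interlacing for rank-one perturbations:** for `H_s = H₀ + s Π_φ`,
`a < b` and `0 ≤ s ≤ t`, one has `tr χ_{(a,b]}(H_s) ≤ 1 + tr χ_{(a,b]}(H_t)`. -/
theorem interlacing_rank_one {n : Type*} [Fintype n] [DecidableEq n]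
    (H₀ : Matrix n n ℂ) (hH₀ : H₀.IsHermitian)
    (φ : n → ℂ) (hφ : star φ ⬝ᵥ φ = 1)
    (a b : ℝ) (hab : a < b) (s t : ℝ) (hs : 0 ≤ s) (hst : s ≤ t) :
    ((specProj (H₀ + (s : ℂ) • vecMulVec φ (star φ)) (Set.Ioc a b)).trace).re
      ≤ 1 + ((specProj (H₀ + (t : ℂ) • vecMulVec φ (star φ)) (Set.Ioc a b)).trace).re :=
  interlacing_rank_one_general H₀ hH₀ φ a b hab s t hst
end

section
/- Let Λ be a finite set, and for each j ∈ Λ let μ_j be a probability measure on ℝ. Let H_{0,Λ} be self-adjoint on ℓ²(Λ) and H_ω = H_{0,Λ} + Σ_{j∈Λ} ω_j Π_j, where the ω_j are independent with distributions μ_j and Π_j is the projection onto δ_j. Suppose each μ_j satisfies the spectral averaging bound ∫⟨δ_j, χ_I(H_{(ω_j^⊥,s)}) δ_j⟩ dμ_j(s) ≤ Q(|I|) for all bounded intervals I and all fixed ω_j^⊥. Then for every bounded interval I: E[tr χ_I(H_ω)] ≤ Q(|I|)·|Λ| (Wegner estimate). -/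
open Matrix MeasureTheory

/-- `I ⊆ ℝ` is a bounded interval. -/
def IsBoundedInterval (I : Set ℝ) : Prop :=
  Bornology.IsBounded I ∧ I.OrdConnected

/-- The generalized Anderson Hamiltonian `H_ω = H₀ + Σ_{j∈Λ} ω_j Π_j` on `ℓ²(Λ)`,
where `Π_j` is the orthogonal projection onto `δ_j`. -/
noncomputable def andersonH {Λ : Type*} [Fintype Λ] [DecidableEq Λ]
    (H₀ : Matrix Λ Λ ℂ) (ω : Λ → ℝ) : Matrix Λ Λ ℂ :=
  H₀ + Matrix.diagonal fun j => (ω j : ℂ)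

/-- The eigenvalue counting function `tr χ_I(H_ω)` (real-valued). -/
noncomputable def nEV {Λ : Type*} [Fintype Λ] [DecidableEq Λ]
    (H₀ : Matrix Λ Λ ℂ) (ω : Λ → ℝ) (I : Set ℝ) : ℝ :=
  ((specProj (andersonH H₀ ω) I).trace).re


/-!
By linearity, `E[tr χ_I(H_ω)] = Σ_j E⟨δ_j, χ_I(H_ω) δ_j⟩`. For each `j`, integrate first in
`ω_j` with the other coordinates frozen: by Fubini for the product measure and the spectral
averaging bound, each summand is at most `Q(|I|)`.

Fubini needs `ω ↦ χ_I(H_ω)_{jj}` to be measurable. For continuous `f`, `ω ↦ f(H_ω)` is continuous,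
and since the functional calculus of a fixed matrix only sees the finitely many eigenvalues, it
is continuous under pointwise convergence of functions. Hence the Borel sets `I` for which
`ω ↦ χ_I(H_ω)` is measurable form a Dynkin system containing the closed sets.
-/

open Filter Topology Function

theorem Set.hasSum_indicator_iUnion {α ι M : Type*} [AddCommMonoid M] [TopologicalSpace M]
    {S : ι → Set α} (hS : Pairwise (Disjoint on S)) (f : α → M) (t : α) :
    HasSum (fun k => (S k).indicator f t) ((⋃ k, S k).indicator f t) := by
  by_cases ht : t ∈ ⋃ k, S k
  · obtain ⟨k₀, hk₀⟩ := Set.mem_iUnion.1 ht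
    rw [Set.indicator_of_mem ht, ← Set.indicator_of_mem hk₀ f]
    exact hasSum_single k₀ fun k hk =>
      Set.indicator_of_notMem (fun h => Set.disjoint_left.1 (hS hk) h hk₀) f
  · have hnot : ∀ k, t ∉ S k := fun k h => ht (Set.mem_iUnion.2 ⟨k, h⟩)
    simp only [Set.indicator_of_notMem ht, Set.indicator_of_notMem (hnot _)]
    exact hasSum_zero

namespace Matrix

variable {n : Type*} [Fintype n] [DecidableEq n]

theorem specProj_eq_cfc (A : Matrix n n ℂ) (I : Set ℝ) : specProj A I = cfc (I.indicator 1) A := by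
  unfold specProj
  split_ifs with hA
  · exact (hA.cfc_eq _).symm
  · exact (cfc_apply_of_not_predicate A (by rwa [← isHermitian_iff_isSelfAdjoint])).symm

section Order

open scoped MatrixOrder ComplexOrder

theorem re_specProj_apply_self_nonneg (A : Matrix n n ℂ) (I : Set ℝ) (j : n) :
    0 ≤ (specProj A I j j).re := by
  have hP : 0 ≤ specProj A I := by
    rw [specProj_eq_cfc]
    exact cfc_nonneg fun t _ => Set.indicator_nonneg (fun _ _ => zero_le_one) t
  exact (Complex.nonneg_iff.1 ((nonneg_iff_posSemidef.1 hP).diag_nonneg (i := j))).1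

theorem re_specProj_apply_self_le_one (A : Matrix n n ℂ) (I : Set ℝ) (j : n) :
    (specProj A I j j).re ≤ 1 := by
  have hP : specProj A I ≤ 1 := by
    rw [specProj_eq_cfc]
    exact cfc_le_one _ _ fun t _ => Set.indicator_le_self' (fun _ _ => zero_le_one) t
  have := (Complex.nonneg_iff.1 ((le_iff.1 hP).diag_nonneg (i := j))).1
  simpa using this

end Order

theorem IsHermitian.tendsto_cfc {ι : Type*} {l : Filter ι} {A : Matrix n n ℂ} (hA : A.IsHermitian)
    {F : ι → ℝ → ℝ} {f : ℝ → ℝ} (hF : ∀ x, Tendsto (F · x) l (𝓝 (f x))) :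
    Tendsto (fun i => hA.cfc (F i)) l (𝓝 (hA.cfc f)) := by
  simp only [IsHermitian.cfc, Unitary.conjStarAlgAut_apply]
  refine (tendsto_const_nhds.mul ?_).mul tendsto_const_nhds
  refine ((continuous_id.matrix_diagonal).tendsto _).comp (tendsto_pi_nhds.2 fun k => ?_)
  exact (Complex.continuous_ofReal.tendsto _).comp (hF _)

theorem tendsto_cfc_of_pointwise {ι : Type*} {l : Filter ι} {F : ι → ℝ → ℝ} {f : ℝ → ℝ}
    (hF : ∀ x, Tendsto (F · x) l (𝓝 (f x))) (A : Matrix n n ℂ) :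
    Tendsto (fun i => cfc (F i) A) l (𝓝 (cfc f A)) := by
  by_cases hA : A.IsHermitian
  · simp only [hA.cfc_eq]
    exact hA.tendsto_cfc hF
  · have hA' : ¬ IsSelfAdjoint A := by rwa [← isHermitian_iff_isSelfAdjoint]
    simp only [cfc_apply_of_not_predicate A hA']
    exact tendsto_const_nhds

open scoped Matrix.Norms.L2Operator in
theorem continuous_cfc_comp {X : Type*} [TopologicalSpace X] {f : ℝ → ℝ} (hf : Continuous f)
    {a : X → Matrix n n ℂ} (ha : Continuous a) (hsa : ∀ x, IsSelfAdjoint (a x)) :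
    Continuous fun x => cfc f (a x) :=
  ha.cfc_of_mem_nhdsSet f Filter.univ_mem hsa hf.continuousOn

section Measurability

variable {X : Type*} [MeasurableSpace X] {a : X → Matrix n n ℂ} {i j : n}

theorem measurable_cfc_apply_of_tendsto {F : ℕ → ℝ → ℝ} {f : ℝ → ℝ}
    (hF : ∀ t, Tendsto (F · t) atTop (𝓝 (f t)))
    (hmeas : ∀ k, Measurable fun x => cfc (F k) (a x) i j) :
    Measurable fun x => cfc f (a x) i j := by
  refine measurable_of_tendsto_metrizable hmeas (tendsto_pi_nhds.2 fun x => ?_)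
  exact (((continuous_apply j).comp (continuous_apply i)).tendsto _).comp
    (tendsto_cfc_of_pointwise hF (a x))

theorem measurable_cfc_indicator_apply [TopologicalSpace X] [OpensMeasurableSpace X]
    (ha : Continuous a) (hsa : ∀ x, IsSelfAdjoint (a x)) {S : Set ℝ} (hS : MeasurableSet S) :
    Measurable fun x => cfc (S.indicator 1) (a x) i j := by
  have hgen : (inferInstance : MeasurableSpace ℝ) = .generateFrom {s | IsClosed s} :=
    BorelSpace.measurable_eq.trans borel_eq_generateFrom_isClosed
  induction S, hS using MeasurableSpace.induction_on_inter hgen isPiSystem_isClosed with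
  | empty => simp
  | basic F hF =>
    replace hF : IsClosed F := hF
    refine measurable_cfc_apply_of_tendsto (F := fun k t => (hF.apprSeq k t : ℝ)) (fun t => ?_)
      fun k => ?_
    · have h := (NNReal.continuous_coe.tendsto _).comp
        (tendsto_pi_nhds.1 (HasOuterApproxClosed.tendsto_apprSeq hF) t)
      by_cases ht : t ∈ F <;> simpa [ht, Function.comp_def] using h
    · have hcont := NNReal.continuous_coe.comp (hF.apprSeq k).continuous
      exact (((continuous_apply j).comp (continuous_apply i)).comp
        (continuous_cfc_comp hcont ha hsa)).measurable
  | compl S _ ih =>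
    have hcompl : ∀ x, cfc (Sᶜ.indicator 1) (a x) = 1 - cfc (S.indicator 1) (a x) := fun x => by
      rw [Set.indicator_compl, ← cfc_one ℝ (a x) (hsa x)]
      exact cfc_sub (1 : ℝ → ℝ) _ (a x) (finite_real_spectrum.continuousOn _)
        (finite_real_spectrum.continuousOn _)
    simp only [hcompl, sub_apply]
    exact measurable_const.sub ih
  | iUnion S hdisj _ ih =>
    refine measurable_cfc_apply_of_tendsto (F := fun N => ∑ k ∈ Finset.range N, (S k).indicator 1)
      (fun t => by simpa only [Finset.sum_apply] using
        (Set.hasSum_indicator_iUnion hdisj 1 t).tendsto_sum_nat) fun N => ?_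
    simp only [cfc_sum _ _ _ fun k _ => (finite_real_spectrum).continuousOn _, Matrix.sum_apply]
    exact Finset.measurable_sum _ fun k _ => ih k

end Measurability

end Matrix

namespace MeasureTheory

theorem integral_pi_le_of_forall_integral_update_le {ι : Type*} [Fintype ι] [DecidableEq ι]
    {X : ι → Type*} [∀ i, MeasurableSpace (X i)] {μ : ∀ i, Measure (X i)}
    [∀ i, IsProbabilityMeasure (μ i)] {g : (∀ i, X i) → ℝ} (hg : Measurable g) (hg0 : 0 ≤ g)
    (j : ι) (hint : ∀ x, Integrable (fun s => g (update x j s)) (μ j)) {c : ℝ}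
    (h : ∀ x, ∫ s, g (update x j s) ∂μ j ≤ c) :
    ∫ x, g x ∂Measure.pi μ ≤ c := by
  obtain ⟨x₀⟩ := nonempty_of_isProbabilityMeasure (Measure.pi μ)
  have hc : 0 ≤ c := (integral_nonneg fun s => hg0 (update x₀ j s)).trans (h x₀)
  have hslice : ∀ x, ∫⁻ s, .ofReal (g (update x j s)) ∂μ j ≤ ∫⁻ _, .ofReal c ∂μ j := fun x => by
    rw [← ofReal_integral_eq_lintegral_ofReal (hint x) (.of_forall fun s => hg0 _),
      lintegral_const, measure_univ, mul_one]
    exact ENNReal.ofReal_le_ofReal (h x)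
  rw [integral_eq_lintegral_of_nonneg_ae (.of_forall hg0) hg.aestronglyMeasurable]
  refine ENNReal.toReal_le_of_le_ofReal hc ?_
  calc ∫⁻ x, .ofReal (g x) ∂Measure.pi μ ≤ ∫⁻ _, .ofReal c ∂Measure.pi μ :=
        lintegral_le_of_lmarginal_le {j} hg.ennreal_ofReal measurable_const fun x => by
          simpa only [lmarginal_singleton] using hslice x
    _ = .ofReal c := by simp

end MeasureTheory

section Anderson

variable {Λ : Type*} [Fintype Λ] [DecidableEq Λ] {H₀ : Matrix Λ Λ ℂ}

theorem isHermitian_andersonH (hH₀ : H₀.IsHermitian) (ω : Λ → ℝ) :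
    (andersonH H₀ ω).IsHermitian :=
  hH₀.add (isHermitian_diagonal_of_self_adjoint _ (funext fun j => Complex.conj_ofReal (ω j)))

theorem continuous_andersonH (H₀ : Matrix Λ Λ ℂ) : Continuous (andersonH H₀) :=
  continuous_const.add (Continuous.matrix_diagonal (by fun_prop))

theorem measurable_specProj_andersonH_apply (hH₀ : H₀.IsHermitian) {I : Set ℝ}
    (hI : MeasurableSet I) (i j : Λ) : Measurable fun ω => specProj (andersonH H₀ ω) I i j := by
  simp only [specProj_eq_cfc]
  exact measurable_cfc_indicator_apply (continuous_andersonH H₀)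
    (fun ω => (isHermitian_andersonH hH₀ ω).isSelfAdjoint) hI

end Anderson

theorem wegner_estimate_general {Λ : Type*} [Fintype Λ] [DecidableEq Λ]
    (H₀ : Matrix Λ Λ ℂ) (hH₀ : H₀.IsHermitian)
    (μ : Λ → Measure ℝ) [∀ j, IsProbabilityMeasure (μ j)]
    (Q : ℝ → ℝ)
    (hSA : ∀ I : Set ℝ, IsBoundedInterval I → ∀ j : Λ, ∀ ω : Λ → ℝ,
      ∫ s : ℝ, ((specProj (andersonH H₀ (Function.update ω j s)) I) j j).re ∂(μ j)
        ≤ Q ((volume I).toReal))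
    (I : Set ℝ) (hI : IsBoundedInterval I) :
    ∫ ω, nEV H₀ ω I ∂(Measure.pi μ) ≤ Q ((volume I).toReal) * Fintype.card Λ := by
  set g : Λ → (Λ → ℝ) → ℝ := fun j ω => (specProj (andersonH H₀ ω) I j j).re
  have hg : ∀ j, Measurable (g j) := fun j =>
    Complex.measurable_re.comp (measurable_specProj_andersonH_apply hH₀ hI.2.measurableSet j j)
  have hg0 : ∀ j, 0 ≤ g j := fun j ω => re_specProj_apply_self_nonneg _ I j
  have hg1 : ∀ j ω, ‖g j ω‖ ≤ 1 := fun j ω => by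
    rw [Real.norm_of_nonneg (hg0 j ω)]
    exact re_specProj_apply_self_le_one _ I j
  have hint : ∀ j, Integrable (g j) (Measure.pi μ) := fun j =>
    .of_bound (hg j).aestronglyMeasurable 1 (.of_forall (hg1 j))
  calc ∫ ω, nEV H₀ ω I ∂(Measure.pi μ)
      = ∑ j, ∫ ω, g j ω ∂(Measure.pi μ) := by
        simp only [nEV, trace, Matrix.diag_apply, Complex.re_sum]
        exact integral_finsetSum _ fun j _ => hint j
    _ ≤ ∑ _j : Λ, Q ((volume I).toReal) := Finset.sum_le_sum fun j _ =>
        integral_pi_le_of_forall_integral_update_le (hg j) (hg0 j) j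
          (fun ω => .of_bound ((hg j).comp (measurable_update ω)).aestronglyMeasurable 1
            (.of_forall fun s => hg1 j _))
          (hSA I hI j)
    _ = Q ((volume I).toReal) * Fintype.card Λ := by
        rw [Finset.sum_const, Finset.card_univ, nsmul_eq_mul, mul_comm]

/-- **Wegner estimate** for the generalized Anderson model: if each single-site measure
satisfies the spectral averaging bound with function `Q`, then
`E[tr χ_I(H_ω)] ≤ Q(|I|)·|Λ|` for every bounded interval `I`. -/
theorem wegner_estimate {Λ : Type*} [Fintype Λ] [DecidableEq Λ]
    (H₀ : Matrix Λ Λ ℂ) (hH₀ : H₀.IsHermitian)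
    (μ : Λ → Measure ℝ) [∀ j, IsProbabilityMeasure (μ j)]
    (Q : ℝ → ℝ) (hQmono : Monotone Q) (hQ0 : ∀ s, 0 ≤ Q s)
    (hSA : ∀ I : Set ℝ, IsBoundedInterval I → ∀ j : Λ, ∀ ω : Λ → ℝ,
      ∫ s : ℝ, ((specProj (andersonH H₀ (Function.update ω j s)) I) j j).re ∂(μ j)
        ≤ Q ((volume I).toReal))
    (I : Set ℝ) (hI : IsBoundedInterval I) :
    ∫ ω, nEV H₀ ω I ∂(Measure.pi μ) ≤ Q ((volume I).toReal) * Fintype.card Λ :=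
  wegner_estimate_general H₀ hH₀ μ Q hSA I hI
end
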